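/- The map sending a unitary operator U on a complex Hilbert space H to Ran{v ↦ ((1+U)v, −i(1−U)v)} ⊆ H ⊕ H (the Cayley graph map) is a bijection from the unitary group of H onto the set of lagrangian subspaces of Ĥ = H ⊕ H, where lagrangian means JL = L⊥ for J(x,y) = (y,−x). -/

import Mathlib

/-!
`J` maps `𝒞(U)` onto `𝒞(-U)`. For unitary `U` the subspaces `𝒞(U)` and `𝒞(-U)` are orthogonal
and together span `Ĥ`, so `J 𝒞(U) = 𝒞(U)ᗮ`; and `𝒞(U)` determines `U` because
`𝒞(U) = {(v, -i v) + (U v, i U v)}` and the eigenspaces `{(v, -i v)}`, `{(w, i w)}` of `J` are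
complementary.

Conversely, for a lagrangian `L` the operator `J` swaps `L` and `Lᗮ`, so the reflection `R_L`
anticommutes with `J` and maps the `-i`-eigenspace isometrically onto the `i`-eigenspace.
Writing `R_L (v, -i v) = (U v, i U v)` defines a unitary `U`, and
`(v, -i v) + R_L (v, -i v) = 2 P_L (v, -i v)` shows `𝒞(U) ≤ L`. A lagrangian contained in another
lagrangian equals it, since `J` is injective and `K ≤ L` implies `Lᗮ ≤ Kᗮ`.
-/

noncomputable section

variable (H : Type) [NormedAddCommGroup H] [InnerProductSpace ℂ H] [CompleteSpace H]

/-- `Ĥ = H ⊕ H` with the Hilbert (l²) structure. -/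
abbrev Hh := WithLp 2 (H × H)

/-- The complex structure `J(x,y) = (y, -x)` on `Ĥ = H ⊕ H`. -/
def hatJ : Hh H →L[ℂ] Hh H :=
  (WithLp.prodContinuousLinearEquiv 2 ℂ H H).symm.toContinuousLinearMap ∘L
    ((ContinuousLinearMap.snd ℂ H H).prod (-(ContinuousLinearMap.fst ℂ H H))) ∘L
    (WithLp.prodContinuousLinearEquiv 2 ℂ H H).toContinuousLinearMap

/-- A subspace `L ⊆ Ĥ` is lagrangian if `JL = L⊥`. -/
def IsLagrangian (L : Submodule ℂ (Hh H)) : Prop :=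
  L.map (hatJ H).toLinearMap = Lᗮ

/-- The Cayley graph map: `𝒞(U) = Ran {v ↦ ((1+U)v, -i(1-U)v)} ⊆ H ⊕ H`. -/
def cayleyGraph (U : H →L[ℂ] H) : Submodule ℂ (Hh H) :=
  LinearMap.range
    (((WithLp.prodContinuousLinearEquiv 2 ℂ H H).symm.toContinuousLinearMap ∘L
      ((1 + U).prod ((-Complex.I) • (1 - U)))) : H →L[ℂ] Hh H).toLinearMap

namespace Submodule

variable {𝕜 E : Type*} [RCLike 𝕜] [NormedAddCommGroup E] [InnerProductSpace 𝕜 E]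
  {K L : Submodule 𝕜 E} {T : E →L[𝕜] E}

theorem orthogonal_eq_of_le_of_sup_eq_top (hL : L ≤ Kᗮ) (hKL : K ⊔ L = ⊤) : Kᗮ = L :=
  calc Kᗮ = (L ⊔ K) ⊓ Kᗮ := by rw [sup_comm, hKL, top_inf_eq]
    _ = L := by rw [sup_inf_assoc_of_le K hL, inf_orthogonal_eq_bot, sup_bot_eq]

theorem map_orthogonal_le_of_map_eq_orthogonal (hT : ∀ x, T (T x) = -x)
    (hK : K.map T.toLinearMap = Kᗮ) : Kᗮ.map T.toLinearMap ≤ K := by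
  rw [← hK, map_le_iff_le_comap]
  rintro _ ⟨x, hx, rfl⟩
  simpa [hT] using hx

theorem isClosed_of_map_eq_orthogonal (hT : Function.Injective T)
    (hK : K.map T.toLinearMap = Kᗮ) : IsClosed (K : Set E) := by
  have : (K : Set E) = T ⁻¹' Kᗮ := by
    rw [← hK, map_coe, ContinuousLinearMap.coe_coe, Set.preimage_image_eq _ hT]
  exact this ▸ (isClosed_orthogonal K).preimage T.continuous

theorem eq_of_le_of_map_eq_orthogonal (hT : Function.Injective T)
    (hK : K.map T.toLinearMap = Kᗮ) (hL : L.map T.toLinearMap = Lᗮ) (hKL : K ≤ L) : K = L := by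
  refine le_antisymm hKL ?_
  rw [← map_le_map_iff_of_injective (f := T.toLinearMap) hT, hK, hL]
  exact orthogonal_le hKL

theorem reflection_apply_eq_neg_apply_reflection [K.HasOrthogonalProjection]
    (hK : K.map T.toLinearMap ≤ Kᗮ) (hK' : Kᗮ.map T.toLinearMap ≤ K) (x : E) :
    K.reflection (T x) = -T (K.reflection x) := by
  obtain ⟨y, hy, z, hz, rfl⟩ := exists_add_mem_mem_orthogonal (K := K) x
  have hTy : T y ∈ Kᗮ := hK (mem_map_of_mem hy)
  have hTz : T z ∈ K := hK' (mem_map_of_mem hz)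
  simp only [map_add, reflection_mem_subspace_eq_self hy, reflection_mem_subspace_eq_self hTz,
    reflection_mem_subspace_orthogonalComplement_eq_neg hz,
    reflection_mem_subspace_orthogonalComplement_eq_neg hTy, map_neg]
  abel

theorem apply_reflection_eq_neg_smul [K.HasOrthogonalProjection]
    (hT : ∀ x, K.reflection (T x) = -T (K.reflection x)) {c : 𝕜} {x : E} (hx : T x = c • x) :
    T (K.reflection x) = (-c) • K.reflection x := by
  rw [neg_smul, ← map_smul, ← hx, hT, neg_neg]

end Submodule

open Complex (I)

section GraphSMul

variable {𝕜 E : Type*} [RCLike 𝕜] [NormedAddCommGroup E] [InnerProductSpace 𝕜 E]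

def graphSMul (c : 𝕜) : E →L[𝕜] WithLp 2 (E × E) :=
  (WithLp.prodContinuousLinearEquiv 2 𝕜 E E).symm.toContinuousLinearMap ∘L
    ((ContinuousLinearMap.id 𝕜 E).prod (c • ContinuousLinearMap.id 𝕜 E))

@[simp]
theorem graphSMul_apply (c : 𝕜) (v : E) : graphSMul c v = WithLp.toLp 2 (v, c • v) := rfl

theorem inner_graphSMul (c d : 𝕜) (v w : E) :
    inner 𝕜 (graphSMul c v) (graphSMul d w) = (1 + starRingEnd 𝕜 c * d) * inner 𝕜 v w := by
  simp [inner_smul_left, inner_smul_right]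
  ring

theorem norm_graphSMul {c : 𝕜} (hc : ‖c‖ = 1) (v : E) :
    ‖graphSMul c v‖ = √2 * ‖v‖ := by
  rw [← sq_eq_sq₀ (norm_nonneg _) (by positivity), WithLp.prod_norm_sq_eq_of_L2, mul_pow,
    Real.sq_sqrt zero_le_two]
  simp [norm_smul, hc]
  ring

theorem graphSMul_add_graphSMul_inj {c d : 𝕜} (hcd : c ≠ d) {v w v' w' : E}
    (h : graphSMul c v + graphSMul d w = graphSMul c v' + graphSMul d w') : v = v' ∧ w = w' := by
  have h₁ : v + w = v' + w' := congrArg WithLp.fst h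
  have h₂ : c • v + d • w = c • v' + d • w' := congrArg WithLp.snd h
  have hw : (d - c) • (w - w') = 0 := by linear_combination (norm := module) h₂ - c • h₁
  rw [smul_eq_zero, sub_eq_zero, sub_eq_zero] at hw
  obtain rfl : w = w' := hw.resolve_left hcd.symm
  exact ⟨add_right_cancel h₁, rfl⟩

theorem range_graphSMul_sup_range_graphSMul {c d : 𝕜} (hcd : c ≠ d) :
    LinearMap.range (graphSMul c : E →L[𝕜] _).toLinearMap ⊔
      LinearMap.range (graphSMul d : E →L[𝕜] _).toLinearMap = ⊤ := by
  have hdc : d - c ≠ 0 := sub_ne_zero.mpr hcd.symm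
  refine eq_top_iff.mpr fun z _ => Submodule.mem_sup.mpr
    ⟨_, ⟨(d - c)⁻¹ • (d • z.fst - z.snd), rfl⟩, _, ⟨(d - c)⁻¹ • (z.snd - c • z.fst), rfl⟩, ?_⟩
  refine WithLp.ofLp_injective 2 (Prod.ext ?_ ?_)
  · simp only [ContinuousLinearMap.coe_coe, graphSMul_apply, map_smul, WithLp.ofLp_add,
      WithLp.ofLp_smul, Prod.smul_mk, Prod.mk_add_mk, WithLp.ofLp_fst]
    match_scalars <;> field_simp <;> ring
  · simp only [ContinuousLinearMap.coe_coe, graphSMul_apply, map_smul, WithLp.ofLp_add,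
      WithLp.ofLp_smul, Prod.smul_mk, Prod.mk_add_mk, WithLp.ofLp_snd]
    match_scalars <;> field_simp <;> ring

end GraphSMul

section Cayley

variable {E : Type} [NormedAddCommGroup E] [InnerProductSpace ℂ E]

theorem hatJ_apply (z : Hh E) : hatJ E z = WithLp.toLp 2 (z.snd, -z.fst) := rfl

theorem hatJ_hatJ (z : Hh E) : hatJ E (hatJ E z) = -z := rfl

theorem hatJ_injective : Function.Injective (hatJ E) :=
  Function.LeftInverse.injective (g := fun z => -hatJ E z) fun z => by simp [hatJ_hatJ]

theorem hatJ_graphSMul {c : ℂ} (hc : c * c = -1) (v : E) :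
    hatJ E (graphSMul c v) = c • graphSMul c v := by
  simp only [hatJ_apply, graphSMul_apply, ← WithLp.toLp_smul, Prod.smul_mk, smul_smul, hc,
    neg_one_smul]
  rfl

theorem eq_graphSMul_of_hatJ_eq {c : ℂ} {z : Hh E} (hz : hatJ E z = c • z) :
    z = graphSMul c z.fst := by
  have : z.snd = c • z.fst := congrArg WithLp.fst hz
  rw [graphSMul_apply, ← this]
  rfl

def cayleyMap (U : E →L[ℂ] E) : E →L[ℂ] Hh E :=
  graphSMul (-I) + graphSMul I ∘L U

theorem cayleyMap_apply (U : E →L[ℂ] E) (v : E) :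
    cayleyMap U v = graphSMul (-I) v + graphSMul I (U v) := rfl

theorem cayleyGraph_eq_range (U : E →L[ℂ] E) :
    cayleyGraph E U = LinearMap.range (cayleyMap U).toLinearMap := by
  rw [cayleyGraph]
  congr 2
  ext v
  simp only [ContinuousLinearMap.comp_apply, ContinuousLinearMap.prod_apply,
    ContinuousLinearEquiv.coe_coe, WithLp.prodContinuousLinearEquiv_symm_apply, cayleyMap_apply,
    graphSMul_apply, ← WithLp.toLp_add, Prod.mk_add_mk]
  congr 2
  simp only [neg_smul, neg_apply, smul_apply, sub_apply, one_apply_eq_self]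
  module

theorem cayleyMap_mem_cayleyGraph (U : E →L[ℂ] E) (v : E) : cayleyMap U v ∈ cayleyGraph E U := by
  rw [cayleyGraph_eq_range]
  exact ⟨v, rfl⟩

theorem cayleyGraph_injective : Function.Injective (cayleyGraph E) := by
  intro U V h
  ext v
  obtain ⟨w, hw⟩ : cayleyMap U v ∈ LinearMap.range (cayleyMap V).toLinearMap := by
    rw [← cayleyGraph_eq_range, ← h]
    exact cayleyMap_mem_cayleyGraph U v
  obtain ⟨rfl, hVU⟩ := graphSMul_add_graphSMul_inj (neg_ne_self.mpr Complex.I_ne_zero) hw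
  exact hVU.symm

theorem map_hatJ_cayleyGraph (U : E →L[ℂ] E) :
    (cayleyGraph E U).map (hatJ E).toLinearMap = cayleyGraph E (-U) := by
  have hJ : hatJ E ∘L cayleyMap U = cayleyMap (-U) ∘L ((-I) • 1) := by
    ext v
    simp only [ContinuousLinearMap.comp_apply, cayleyMap_apply, map_add,
      hatJ_graphSMul (c := -I) (by simp), hatJ_graphSMul Complex.I_mul_I, smul_apply,
      one_apply_eq_self, map_smul, neg_apply, map_neg]
    module
  have hsurj : LinearMap.range ((-I) • 1 : E →L[ℂ] E).toLinearMap = ⊤ :=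
    LinearMap.range_eq_top.mpr fun v => ⟨I • v, by simp [smul_smul]⟩
  rw [cayleyGraph_eq_range, cayleyGraph_eq_range, ← LinearMap.range_comp,
    ← ContinuousLinearMap.toLinearMap_comp, hJ, ContinuousLinearMap.toLinearMap_comp,
    LinearMap.range_comp_of_range_eq_top _ hsurj]

theorem cayleyGraph_neg_le_orthogonal [CompleteSpace E] {U : E →L[ℂ] E}
    (hU : U ∈ unitary (E →L[ℂ] E)) : cayleyGraph E (-U) ≤ (cayleyGraph E U)ᗮ := by
  rw [cayleyGraph_eq_range, cayleyGraph_eq_range]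
  rintro _ ⟨w, rfl⟩
  rw [Submodule.mem_orthogonal]
  rintro _ ⟨v, rfl⟩
  simp only [ContinuousLinearMap.coe_coe, cayleyMap_apply, neg_apply, map_neg, inner_add_left,
    inner_add_right, inner_neg_right, inner_graphSMul, U.inner_map_map_of_mem_unitary hU]
  simp

theorem cayleyGraph_sup_cayleyGraph_neg {U : E →L[ℂ] E} (hU : Function.Surjective U) :
    cayleyGraph E U ⊔ cayleyGraph E (-U) = ⊤ := by
  rw [eq_top_iff, ← range_graphSMul_sup_range_graphSMul (neg_ne_self.mpr Complex.I_ne_zero)]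
  refine sup_le ?_ ?_
  · rintro _ ⟨v, rfl⟩
    have : graphSMul (-I) v = (2⁻¹ : ℂ) • (cayleyMap U v + cayleyMap (-U) v) := by
      simp only [cayleyMap_apply, neg_apply, map_neg]
      module
    rw [ContinuousLinearMap.coe_coe, this]
    exact Submodule.smul_mem _ _ (Submodule.add_mem_sup (cayleyMap_mem_cayleyGraph _ _)
      (cayleyMap_mem_cayleyGraph _ _))
  · rintro _ ⟨w, rfl⟩
    obtain ⟨v, rfl⟩ := hU w
    have : graphSMul I (U v) = (2⁻¹ : ℂ) • (cayleyMap U v - cayleyMap (-U) v) := by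
      simp only [cayleyMap_apply, neg_apply, map_neg]
      module
    rw [ContinuousLinearMap.coe_coe, this]
    exact Submodule.smul_mem _ _ (Submodule.sub_mem_sup (cayleyMap_mem_cayleyGraph _ _)
      (cayleyMap_mem_cayleyGraph _ _))

theorem isLagrangian_cayleyGraph [CompleteSpace E] {U : E →L[ℂ] E}
    (hU : U ∈ unitary (E →L[ℂ] E)) : IsLagrangian E (cayleyGraph E U) := by
  have hsurj : Function.Surjective U := (Unitary.linearIsometryEquiv ⟨U, hU⟩).surjective
  rw [IsLagrangian, map_hatJ_cayleyGraph]
  exact (Submodule.orthogonal_eq_of_le_of_sup_eq_top (cayleyGraph_neg_le_orthogonal hU)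
    (cayleyGraph_sup_cayleyGraph_neg hsurj)).symm

end Cayley

section Lagrangian

variable {E : Type} [NormedAddCommGroup E] [InnerProductSpace ℂ E]

def cayleyInverse (L : Submodule ℂ (Hh E)) [L.HasOrthogonalProjection] : E →L[ℂ] E :=
  WithLp.fstL 2 ℂ E E ∘L (L.reflection.toContinuousLinearEquiv : Hh E →L[ℂ] Hh E) ∘L
    graphSMul (-I)

variable {L : Submodule ℂ (Hh E)}

namespace IsLagrangian

theorem hasOrthogonalProjection [CompleteSpace E] (hL : IsLagrangian E L) :
    L.HasOrthogonalProjection :=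
  have := (Submodule.isClosed_of_map_eq_orthogonal hatJ_injective hL).completeSpace_coe
  inferInstance

variable [L.HasOrthogonalProjection]

theorem reflection_hatJ (hL : IsLagrangian E L) (z : Hh E) :
    L.reflection (hatJ E z) = -hatJ E (L.reflection z) :=
  Submodule.reflection_apply_eq_neg_apply_reflection hL.le
    (Submodule.map_orthogonal_le_of_map_eq_orthogonal hatJ_hatJ hL) z

theorem reflection_graphSMul_neg_I (hL : IsLagrangian E L) (v : E) :
    L.reflection (graphSMul (-I) v) = graphSMul I (cayleyInverse L v) := by
  have h := Submodule.apply_reflection_eq_neg_smul hL.reflection_hatJ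
    (hatJ_graphSMul (c := -I) (by simp) v)
  rw [neg_neg] at h
  exact eq_graphSMul_of_hatJ_eq h

theorem reflection_graphSMul_I (hL : IsLagrangian E L) (w : E) :
    L.reflection (graphSMul I w) = graphSMul (-I) (L.reflection (graphSMul I w)).fst :=
  eq_graphSMul_of_hatJ_eq <|
    Submodule.apply_reflection_eq_neg_smul hL.reflection_hatJ (hatJ_graphSMul Complex.I_mul_I w)

theorem surjective_cayleyInverse (hL : IsLagrangian E L) :
    Function.Surjective (cayleyInverse L) := by
  intro w
  refine ⟨(L.reflection (graphSMul I w)).fst, ?_⟩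
  have h := hL.reflection_graphSMul_neg_I (L.reflection (graphSMul I w)).fst
  rw [← hL.reflection_graphSMul_I, Submodule.reflection_reflection] at h
  exact (congrArg WithLp.fst h).symm

theorem norm_cayleyInverse_apply (hL : IsLagrangian E L) (v : E) :
    ‖cayleyInverse L v‖ = ‖v‖ := by
  have h := congrArg norm (hL.reflection_graphSMul_neg_I v)
  rw [LinearIsometryEquiv.norm_map, norm_graphSMul (by simp), norm_graphSMul (by simp)] at h
  exact (mul_left_cancel₀ (by positivity) h).symm

theorem cayleyInverse_mem_unitary [CompleteSpace E] (hL : IsLagrangian E L) :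
    cayleyInverse L ∈ unitary (E →L[ℂ] E) :=
  (Unitary.linearIsometryEquiv.symm <| LinearIsometryEquiv.ofSurjective
    ⟨(cayleyInverse L : E →ₗ[ℂ] E), hL.norm_cayleyInverse_apply⟩ hL.surjective_cayleyInverse).prop

theorem cayleyGraph_cayleyInverse_le (hL : IsLagrangian E L) :
    cayleyGraph E (cayleyInverse L) ≤ L := by
  rw [cayleyGraph_eq_range]
  rintro _ ⟨v, rfl⟩
  have h : cayleyMap (cayleyInverse L) v = (2 : ℕ) • L.starProjection (graphSMul (-I) v) := by
    rw [cayleyMap_apply, ← hL.reflection_graphSMul_neg_I, Submodule.reflection_apply]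
    abel
  rw [ContinuousLinearMap.coe_coe, h]
  exact L.smul_of_tower_mem _ (L.starProjection_apply_mem _)

theorem cayleyGraph_cayleyInverse [CompleteSpace E] (hL : IsLagrangian E L) :
    cayleyGraph E (cayleyInverse L) = L :=
  Submodule.eq_of_le_of_map_eq_orthogonal hatJ_injective
    (isLagrangian_cayleyGraph hL.cayleyInverse_mem_unitary) hL hL.cayleyGraph_cayleyInverse_le

end IsLagrangian

end Lagrangian

/-- the Cayley graph map `U ↦ Ran {v ↦ ((1+U)v, -i(1-U)v)}` is a
bijection from the unitary group of `H` onto the set of lagrangian subspaces of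
`Ĥ = H ⊕ H`. -/
theorem cayleyGraph_bijOn_unitary :
    Set.BijOn (cayleyGraph H)
      {U : H →L[ℂ] H | U ∈ unitary (H →L[ℂ] H)}
      {L : Submodule ℂ (Hh H) | IsLagrangian H L} := by
  refine ⟨fun U hU => isLagrangian_cayleyGraph hU, cayleyGraph_injective.injOn, fun L hL => ?_⟩
  have := hL.hasOrthogonalProjection
  exact ⟨cayleyInverse L, hL.cayleyInverse_mem_unitary, hL.cayleyGraph_cayleyInverse⟩
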